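/- arXiv:1107.5527 — 2 statements merged into one kernel-verified Lean document; each statement's English description precedes it below -/
import Mathlib

section
/- Suppose a family of gluing maps G_I satisfies the two compatibility identities of Theorem 3.3: (1) G_{I₁}(x,Λ) = G_{I₂}(G_{I₁}(x, Λ(I₁−I₂)), Λ_{I₁,I₂}) for I₂ ⪯ I₁, and (2) G_{I₁·I₂}(x₁·x₂, Λ₁·Λ₂) = (G_{I₁}(x₁,Λ₁), G_{I₂}(x₂,Λ₂)). Then the pairwise gluing γ₁ #_λ γ₂ := G_{{p,r,q}}(γ₁,γ₂,λ) is associative: (γ₁ #_{λ₁} γ₂) #_{λ₂} γ₃ = γ₁ #_{λ₁} (γ₂ #_{λ₂} γ₃) for λ₁, λ₂ in a sufficiently small interval (0,ε). -/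
theorem gluing_associative_general
    (Ω : Type)
    -- the compactified moduli spaces `M̄(p,q)`
    (Mb : Ω → Ω → Type)
    -- the face embeddings `M̄(p,r) × M̄(r,q) ↪ M̄(p,q)`
    (ι : ∀ p r q : Ω, Mb p r × Mb r q → Mb p q)
    -- gluing maps for chains of length 1 and 2
    (G2 : ∀ p r q : Ω, Mb p r × Mb r q → ℝ → Mb p q)
    (G3 : ∀ p r s q : Ω, Mb p r × Mb r s × Mb s q → ℝ × ℝ → Mb p q)
    (ε : ℝ)
    -- identity (2), gluing the first pair (the tail chain has length 0)
    (h2a : ∀ (p r s q : Ω) (x : Mb p r) (y : Mb r s) (z : Mb s q) (l : ℝ),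
      0 ≤ l → l < ε → G3 p r s q (x, y, z) (l, 0) = ι p s q (G2 p r s (x, y) l, z))
    -- identity (2), gluing the second pair (the head chain has length 0)
    (h2b : ∀ (p r s q : Ω) (x : Mb p r) (y : Mb r s) (z : Mb s q) (l : ℝ),
      0 ≤ l → l < ε → G3 p r s q (x, y, z) (0, l) = ι p r q (x, G2 r s q (y, z) l))
    -- identity (1), with I₁ = {p,r,s,q} and I₂ = {p,s,q}
    (h1a : ∀ (p r s q : Ω) (w : Mb p r × Mb r s × Mb s q) (l₁ l₂ : ℝ)
      (a : Mb p s) (b : Mb s q), 0 ≤ l₁ → l₁ < ε → 0 ≤ l₂ → l₂ < ε →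
      G3 p r s q w (l₁, 0) = ι p s q (a, b) →
      G3 p r s q w (l₁, l₂) = G2 p s q (a, b) l₂)
    -- identity (1), with I₁ = {p,r,s,q} and I₂ = {p,r,q}
    (h1b : ∀ (p r s q : Ω) (w : Mb p r × Mb r s × Mb s q) (l₁ l₂ : ℝ)
      (a : Mb p r) (b : Mb r q), 0 ≤ l₁ → l₁ < ε → 0 ≤ l₂ → l₂ < ε →
      G3 p r s q w (0, l₂) = ι p r q (a, b) →
      G3 p r s q w (l₁, l₂) = G2 p r q (a, b) l₁)
    -- three consecutive trajectories
    (p₀ p₁ p₂ p₃ : Ω)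
    (γ₁ : Mb p₀ p₁) (γ₂ : Mb p₁ p₂) (γ₃ : Mb p₂ p₃)
    (l₁ l₂ : ℝ) (hl₁ : l₁ ∈ Set.Ioo 0 ε) (hl₂ : l₂ ∈ Set.Ioo 0 ε) :
    -- (γ₁ #_{l₁} γ₂) #_{l₂} γ₃ = γ₁ #_{l₁} (γ₂ #_{l₂} γ₃)
    G2 p₀ p₂ p₃ (G2 p₀ p₁ p₂ (γ₁, γ₂) l₁, γ₃) l₂ =
      G2 p₀ p₁ p₃ (γ₁, G2 p₁ p₂ p₃ (γ₂, γ₃) l₂) l₁ := by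
  -- Both sides are the triple gluing `G3 (γ₁, γ₂, γ₃) (l₁, l₂)`, reached through either face.
  obtain ⟨hl₁_pos, hl₁_lt⟩ := hl₁
  obtain ⟨hl₂_pos, hl₂_lt⟩ := hl₂
  have glue_first_pair :=
    h1a p₀ p₁ p₂ p₃ (γ₁, γ₂, γ₃) l₁ l₂ _ γ₃ hl₁_pos.le hl₁_lt hl₂_pos.le hl₂_lt
      (h2a p₀ p₁ p₂ p₃ γ₁ γ₂ γ₃ l₁ hl₁_pos.le hl₁_lt)
  have glue_second_pair :=
    h1b p₀ p₁ p₂ p₃ (γ₁, γ₂, γ₃) l₁ l₂ γ₁ _ hl₁_pos.le hl₁_lt hl₂_pos.le hl₂_lt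
      (h2b p₀ p₁ p₂ p₃ γ₁ γ₂ γ₃ l₂ hl₂_pos.le hl₂_lt)
  exact glue_first_pair.symm.trans glue_second_pair

theorem gluing_associative
    (Ω : Type) [PartialOrder Ω]
    -- the compactified moduli spaces `M̄(p,q)`
    (Mb : Ω → Ω → Type)
    -- the face embeddings `M̄(p,r) × M̄(r,q) ↪ M̄(p,q)`
    (ι : ∀ p r q : Ω, Mb p r × Mb r q → Mb p q)
    -- gluing maps for chains of length 1 and 2
    (G2 : ∀ p r q : Ω, Mb p r × Mb r q → ℝ → Mb p q)
    (G3 : ∀ p r s q : Ω, Mb p r × Mb r s × Mb s q → ℝ × ℝ → Mb p q)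
    (ε : ℝ) (hε : 0 < ε)
    -- identity (2), gluing the first pair (the tail chain has length 0)
    (h2a : ∀ (p r s q : Ω) (x : Mb p r) (y : Mb r s) (z : Mb s q) (l : ℝ),
      0 ≤ l → l < ε → G3 p r s q (x, y, z) (l, 0) = ι p s q (G2 p r s (x, y) l, z))
    -- identity (2), gluing the second pair (the head chain has length 0)
    (h2b : ∀ (p r s q : Ω) (x : Mb p r) (y : Mb r s) (z : Mb s q) (l : ℝ),
      0 ≤ l → l < ε → G3 p r s q (x, y, z) (0, l) = ι p r q (x, G2 r s q (y, z) l))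
    -- identity (1), with I₁ = {p,r,s,q} and I₂ = {p,s,q}
    (h1a : ∀ (p r s q : Ω) (w : Mb p r × Mb r s × Mb s q) (l₁ l₂ : ℝ)
      (a : Mb p s) (b : Mb s q), 0 ≤ l₁ → l₁ < ε → 0 ≤ l₂ → l₂ < ε →
      G3 p r s q w (l₁, 0) = ι p s q (a, b) →
      G3 p r s q w (l₁, l₂) = G2 p s q (a, b) l₂)
    -- identity (1), with I₁ = {p,r,s,q} and I₂ = {p,r,q}
    (h1b : ∀ (p r s q : Ω) (w : Mb p r × Mb r s × Mb s q) (l₁ l₂ : ℝ)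
      (a : Mb p r) (b : Mb r q), 0 ≤ l₁ → l₁ < ε → 0 ≤ l₂ → l₂ < ε →
      G3 p r s q w (0, l₂) = ι p r q (a, b) →
      G3 p r s q w (l₁, l₂) = G2 p r q (a, b) l₁)
    -- three consecutive trajectories
    (p₀ p₁ p₂ p₃ : Ω) (h01 : p₁ < p₀) (h12 : p₂ < p₁) (h23 : p₃ < p₂)
    (γ₁ : Mb p₀ p₁) (γ₂ : Mb p₁ p₂) (γ₃ : Mb p₂ p₃)
    (l₁ l₂ : ℝ) (hl₁ : l₁ ∈ Set.Ioo 0 ε) (hl₂ : l₂ ∈ Set.Ioo 0 ε) :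
    -- (γ₁ #_{l₁} γ₂) #_{l₂} γ₃ = γ₁ #_{l₁} (γ₂ #_{l₂} γ₃)
    G2 p₀ p₂ p₃ (G2 p₀ p₁ p₂ (γ₁, γ₂) l₁, γ₃) l₂ =
      G2 p₀ p₁ p₃ (γ₁, G2 p₁ p₂ p₃ (γ₂, γ₃) l₂) l₁ :=
  gluing_associative_general Ω Mb ι G2 G3 ε h2a h2b h1a h1b p₀ p₁ p₂ p₃ γ₁ γ₂ γ₃ l₁ l₂ hl₁ hl₂
end

section
/- Abstract version of the associativity derivation: Let G be a family of maps indexed by chains in a poset, such that the 'one-pair compatibility' identity and the 'pairs compatibility' identity hold (as purely algebraic identities on products of sets with nonnegative real parameters). Then the induced binary operation #_λ satisfies (x #_{λ₁} y) #_{λ₂} z = x #_{λ₁} (y #_{λ₂} z) for positive parameters in the common range of validity. -/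
/-!
Both sides are faces of the same two-parameter gluing `G3 (γ₁, γ₂, γ₃) (l₁, l₂)`.
Switching off the second parameter, pairs compatibility gives
`G3 (γ₁, γ₂, γ₃) (l₁, 0) = ι (γ₁ #_{l₁} γ₂, γ₃) = ι (incl a, incl γ₃)`, so one-pair compatibility
for the subchain `{p₀, p₂, p₃}` identifies `G3 (γ₁, γ₂, γ₃) (l₁, l₂)` with `a #_{l₂} γ₃`;
switching off the first parameter instead identifies it with `γ₁ #_{l₁} b`.
-/

theorem abstract_gluing_associative_general
    (Ω : Type)
    -- the open moduli sets `M(p,q)` and their compactifications `M̄(p,q)`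
    (M Mb : Ω → Ω → Type)
    -- inclusion of the open stratum: the gluing map of a length-0 chain
    (incl : ∀ p q : Ω, M p q → Mb p q)
    -- the face embeddings `M̄(p,r) × M̄(r,q) ↪ M̄(p,q)`
    (ι : ∀ p r q : Ω, Mb p r × Mb r q → Mb p q)
    -- gluing maps for chains of length 1 and 2, defined on the products M_I
    (G2 : ∀ p r q : Ω, M p r × M r q → ℝ → Mb p q)
    (G3 : ∀ p r s q : Ω, M p r × M r s × M s q → ℝ × ℝ → Mb p q)
    (ε : ℝ)
    -- pairs compatibility (2), where the gluing map of {s,q} is the inclusion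
    (h2a : ∀ (p r s q : Ω) (x : M p r) (y : M r s) (z : M s q) (l : ℝ),
      0 ≤ l → l < ε →
      G3 p r s q (x, y, z) (l, 0) = ι p s q (G2 p r s (x, y) l, incl s q z))
    -- pairs compatibility (2), where the gluing map of {p,r} is the inclusion
    (h2b : ∀ (p r s q : Ω) (x : M p r) (y : M r s) (z : M s q) (l : ℝ),
      0 ≤ l → l < ε →
      G3 p r s q (x, y, z) (0, l) = ι p r q (incl p r x, G2 r s q (y, z) l))
    -- one-pair compatibility (1), with I₁ = {p,r,s,q} and I₂ = {p,s,q}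
    (h1a : ∀ (p r s q : Ω) (w : M p r × M r s × M s q) (l₁ l₂ : ℝ)
      (a : M p s) (b : M s q), 0 ≤ l₁ → l₁ < ε → 0 ≤ l₂ → l₂ < ε →
      G3 p r s q w (l₁, 0) = ι p s q (incl p s a, incl s q b) →
      G3 p r s q w (l₁, l₂) = G2 p s q (a, b) l₂)
    -- one-pair compatibility (1), with I₁ = {p,r,s,q} and I₂ = {p,r,q}
    (h1b : ∀ (p r s q : Ω) (w : M p r × M r s × M s q) (l₁ l₂ : ℝ)
      (a : M p r) (b : M r q), 0 ≤ l₁ → l₁ < ε → 0 ≤ l₂ → l₂ < ε →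
      G3 p r s q w (0, l₂) = ι p r q (incl p r a, incl r q b) →
      G3 p r s q w (l₁, l₂) = G2 p r q (a, b) l₁)
    -- three consecutive elements of the strata
    (p₀ p₁ p₂ p₃ : Ω)
    (γ₁ : M p₀ p₁) (γ₂ : M p₁ p₂) (γ₃ : M p₂ p₃)
    (l₁ l₂ : ℝ) (hl₁ : l₁ ∈ Set.Ioo 0 ε) (hl₂ : l₂ ∈ Set.Ioo 0 ε)
    -- by the stratum condition, for positive parameters the glued objects lie in the
    -- open strata: a = γ₁ #_{l₁} γ₂ and b = γ₂ #_{l₂} γ₃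
    (a : M p₀ p₂) (ha : incl p₀ p₂ a = G2 p₀ p₁ p₂ (γ₁, γ₂) l₁)
    (b : M p₁ p₃) (hb : incl p₁ p₃ b = G2 p₁ p₂ p₃ (γ₂, γ₃) l₂) :
    -- (γ₁ #_{l₁} γ₂) #_{l₂} γ₃ = γ₁ #_{l₁} (γ₂ #_{l₂} γ₃)
    G2 p₀ p₂ p₃ (a, γ₃) l₂ = G2 p₀ p₁ p₃ (γ₁, b) l₁ := by
  obtain ⟨hl₁_pos, hl₁_lt⟩ := hl₁
  obtain ⟨hl₂_pos, hl₂_lt⟩ := hl₂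
  have glue_left_first :
      G3 p₀ p₁ p₂ p₃ (γ₁, γ₂, γ₃) (l₁, l₂) = G2 p₀ p₂ p₃ (a, γ₃) l₂ := by
    refine h1a _ _ _ _ _ _ _ _ _ hl₁_pos.le hl₁_lt hl₂_pos.le hl₂_lt ?_
    rw [h2a _ _ _ _ _ _ _ _ hl₁_pos.le hl₁_lt, ha]
  have glue_right_first :
      G3 p₀ p₁ p₂ p₃ (γ₁, γ₂, γ₃) (l₁, l₂) = G2 p₀ p₁ p₃ (γ₁, b) l₁ := by
    refine h1b _ _ _ _ _ _ _ _ _ hl₁_pos.le hl₁_lt hl₂_pos.le hl₂_lt ?_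
    rw [h2b _ _ _ _ _ _ _ _ hl₂_pos.le hl₂_lt, hb]
  rw [← glue_left_first, glue_right_first]

theorem abstract_gluing_associative
    (Ω : Type) [PartialOrder Ω]
    -- the open moduli sets `M(p,q)` and their compactifications `M̄(p,q)`
    (M Mb : Ω → Ω → Type)
    -- inclusion of the open stratum: the gluing map of a length-0 chain
    (incl : ∀ p q : Ω, M p q → Mb p q)
    -- the face embeddings `M̄(p,r) × M̄(r,q) ↪ M̄(p,q)`
    (ι : ∀ p r q : Ω, Mb p r × Mb r q → Mb p q)
    -- gluing maps for chains of length 1 and 2, defined on the products M_I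
    (G2 : ∀ p r q : Ω, M p r × M r q → ℝ → Mb p q)
    (G3 : ∀ p r s q : Ω, M p r × M r s × M s q → ℝ × ℝ → Mb p q)
    (ε : ℝ) (hε : 0 < ε)
    -- pairs compatibility (2), where the gluing map of {s,q} is the inclusion
    (h2a : ∀ (p r s q : Ω) (x : M p r) (y : M r s) (z : M s q) (l : ℝ),
      0 ≤ l → l < ε →
      G3 p r s q (x, y, z) (l, 0) = ι p s q (G2 p r s (x, y) l, incl s q z))
    -- pairs compatibility (2), where the gluing map of {p,r} is the inclusion
    (h2b : ∀ (p r s q : Ω) (x : M p r) (y : M r s) (z : M s q) (l : ℝ),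
      0 ≤ l → l < ε →
      G3 p r s q (x, y, z) (0, l) = ι p r q (incl p r x, G2 r s q (y, z) l))
    -- one-pair compatibility (1), with I₁ = {p,r,s,q} and I₂ = {p,s,q}
    (h1a : ∀ (p r s q : Ω) (w : M p r × M r s × M s q) (l₁ l₂ : ℝ)
      (a : M p s) (b : M s q), 0 ≤ l₁ → l₁ < ε → 0 ≤ l₂ → l₂ < ε →
      G3 p r s q w (l₁, 0) = ι p s q (incl p s a, incl s q b) →
      G3 p r s q w (l₁, l₂) = G2 p s q (a, b) l₂)
    -- one-pair compatibility (1), with I₁ = {p,r,s,q} and I₂ = {p,r,q}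
    (h1b : ∀ (p r s q : Ω) (w : M p r × M r s × M s q) (l₁ l₂ : ℝ)
      (a : M p r) (b : M r q), 0 ≤ l₁ → l₁ < ε → 0 ≤ l₂ → l₂ < ε →
      G3 p r s q w (0, l₂) = ι p r q (incl p r a, incl r q b) →
      G3 p r s q w (l₁, l₂) = G2 p r q (a, b) l₁)
    -- three consecutive elements of the strata
    (p₀ p₁ p₂ p₃ : Ω) (h01 : p₁ < p₀) (h12 : p₂ < p₁) (h23 : p₃ < p₂)
    (γ₁ : M p₀ p₁) (γ₂ : M p₁ p₂) (γ₃ : M p₂ p₃)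
    (l₁ l₂ : ℝ) (hl₁ : l₁ ∈ Set.Ioo 0 ε) (hl₂ : l₂ ∈ Set.Ioo 0 ε)
    -- by the stratum condition, for positive parameters the glued objects lie in the
    -- open strata: a = γ₁ #_{l₁} γ₂ and b = γ₂ #_{l₂} γ₃
    (a : M p₀ p₂) (ha : incl p₀ p₂ a = G2 p₀ p₁ p₂ (γ₁, γ₂) l₁)
    (b : M p₁ p₃) (hb : incl p₁ p₃ b = G2 p₁ p₂ p₃ (γ₂, γ₃) l₂) :
    -- (γ₁ #_{l₁} γ₂) #_{l₂} γ₃ = γ₁ #_{l₁} (γ₂ #_{l₂} γ₃)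
    G2 p₀ p₂ p₃ (a, γ₃) l₂ = G2 p₀ p₁ p₃ (γ₁, b) l₁ :=
  abstract_gluing_associative_general Ω M Mb incl ι G2 G3 ε h2a h2b h1a h1b p₀ p₁ p₂ p₃ γ₁ γ₂ γ₃ l₁
    l₂ hl₁ hl₂ a ha b hb
end
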